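/- In the setting of the well-definedness lemma (A = S(V)#_f G; α, ς automorphisms of A determined by bijective k[G]-linear α̂, ς̂ and group homomorphisms χ_α, χ_ς; δ̂_1, δ̂_2 : V → A linear; δ̄_1, δ̄_2 : G → A), assume ς is an algebra automorphism and δ_1, δ_2 : A → A are well defined by the formulas δ_1(v_1⋯v_m w_g) = Σ_j α(v_1⋯v_{j-1})δ̂_1(v_j)ς(v_{j+1}⋯v_m w_g) + α(v_1⋯v_m)δ̄_1(g) and δ_2(v_1⋯v_m w_g) = Σ_j ς(α^{-1}(v_1⋯v_{j-1}))δ̂_2(v_j)v_{j+1}⋯v_m w_g + ς(α^{-1}(v_1⋯v_m))δ̄_2(g). Then: (1) δ_1 satisfies δ_1(x_1⋯x_m) = Σ_{j=1}^m α(x_1⋯x_{j-1})δ_1(x_j)ς(x_{j+1}⋯x_m) for all x_1,…,x_m ∈ (k#_fG)∪V if and only if, for all v ∈ V and g,h ∈ G: (a) δ̂_1(^gv)χ_ς(g)w_g + α̂(^gv)δ̄_1(g) = δ̄_1(g)ς̂(v) + χ_α(g)w_g·δ̂_1(v), and (b) f(g,h)δ̄_1(gh) = δ̄_1(g)χ_ς(h)w_h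 + χ_α(g)w_g·δ̄_1(h); (2) δ_2 satisfies δ_2(x_1⋯x_m) = Σ_{j=1}^m ς(α^{-1}(x_1⋯x_{j-1}))δ_2(x_j)x_{j+1}⋯x_m for all such x_i if and only if, for all v ∈ V and g,h ∈ G: (a) δ̂_2(^gv)w_g + ς̂(α̂^{-1}(^gv))δ̄_2(g) = δ̄_2(g)v + χ_ς(g)χ_α^{-1}(g)w_g·δ̂_2(v), and (b) f(g,h)δ̄_2(gh) = δ̄_2(g)w_h + χ_ς(g)χ_α^{-1}(g)w_g·δ̄_2(h). -/

import Mathlib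

open TensorProduct

noncomputable section
namespace Paper

variable {k : Type*} [Field k]

section Combinators

variable {M N P Q M' N' P' M'' : Type*}
  [AddCommMonoid M] [AddCommMonoid N] [AddCommMonoid P] [AddCommMonoid Q]
  [AddCommMonoid M'] [AddCommMonoid N'] [AddCommMonoid P'] [AddCommMonoid M'']
  [Module k M] [Module k N] [Module k P] [Module k Q]
  [Module k M'] [Module k N'] [Module k P'] [Module k M'']

/-- `(s ⊗ id) ∘ (id ⊗ s)` : braid a pair of factors past `P`. -/
def braidPast (f : N ⊗[k] P →ₗ[k] P ⊗[k] N') (g : M ⊗[k] P →ₗ[k] P ⊗[k] M') :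
    (M ⊗[k] N) ⊗[k] P →ₗ[k] P ⊗[k] (M' ⊗[k] N') :=
  (TensorProduct.assoc k P M' N').toLinearMap
    ∘ₗ g.rTensor N'
    ∘ₗ (TensorProduct.assoc k M P N').symm.toLinearMap
    ∘ₗ f.lTensor M
    ∘ₗ (TensorProduct.assoc k M N P).toLinearMap

def braidUnder (f : M ⊗[k] N →ₗ[k] N' ⊗[k] M') (g : M' ⊗[k] P →ₗ[k] P' ⊗[k] M'') :
    M ⊗[k] (N ⊗[k] P) →ₗ[k] (N' ⊗[k] P') ⊗[k] M'' :=
  (TensorProduct.assoc k N' P' M'').symm.toLinearMap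
    ∘ₗ g.lTensor N'
    ∘ₗ (TensorProduct.assoc k N' M' P).toLinearMap
    ∘ₗ f.rTensor P
    ∘ₗ (TensorProduct.assoc k M N P).symm.toLinearMap

def midMap (f : N ⊗[k] P →ₗ[k] P' ⊗[k] N') :
    (M ⊗[k] N) ⊗[k] (P ⊗[k] Q) →ₗ[k] (M ⊗[k] P') ⊗[k] (N' ⊗[k] Q) :=
  (TensorProduct.assoc k M P' (N' ⊗[k] Q)).symm.toLinearMap
    ∘ₗ ((TensorProduct.assoc k P' N' Q).toLinearMap.lTensor M)
    ∘ₗ ((f.rTensor Q).lTensor M)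
    ∘ₗ ((TensorProduct.assoc k N P Q).symm.toLinearMap.lTensor M)
    ∘ₗ (TensorProduct.assoc k M N (P ⊗[k] Q)).toLinearMap

end Combinators

section Hq

variable (k)
variable (H : Type*) [Ring H]

/-- Axiomatisation of the Hopf algebra `H_q`. -/
structure HqData [HopfAlgebra k H] (q : k) where
  D₁ : H
  D₂ : H
  σ : Hˣ
  D_comm : D₁ * D₂ = D₂ * D₁
  σD₁ : q • ((σ : H) * D₁) = D₁ * (σ : H)
  σD₂ : q • ((σ : H) * D₂) = D₂ * (σ : H)
  comul_D₁ : Coalgebra.comul (R := k) D₁ = D₁ ⊗ₜ[k] (σ : H) + 1 ⊗ₜ[k] D₁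
  comul_D₂ : Coalgebra.comul (R := k) D₂ = D₂ ⊗ₜ[k] (1 : H) + (σ : H) ⊗ₜ[k] D₂
  comul_σ : Coalgebra.comul (R := k) ((σ : H)) = (σ : H) ⊗ₜ[k] (σ : H)
  counit_D₁ : Coalgebra.counit (R := k) D₁ = 0
  counit_D₂ : Coalgebra.counit (R := k) D₂ = 0
  counit_σ : Coalgebra.counit (R := k) ((σ : H)) = 1
  basis_generic : (∀ l : ℕ, 2 ≤ l → ¬ IsPrimitiveRoot q l) →
      ∃ b : Module.Basis (ℤ × ℕ × ℕ) k H,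
        ∀ i j m, b (i, j, m) = ((σ ^ i : Hˣ) : H) * D₁ ^ j * D₂ ^ m
  basis_root : ∀ l : ℕ, 2 ≤ l → IsPrimitiveRoot q l →
      D₁ ^ l = 0 ∧ D₂ ^ l = 0 ∧
      ∃ b : Module.Basis (ℤ × Fin l × Fin l) k H,
        ∀ i j m, b (i, j, m) = ((σ ^ i : Hˣ) : H) * D₁ ^ (j : ℕ) * D₂ ^ (m : ℕ)

variable (A : Type*) [Ring A] [Algebra k A]

/-- A left transposition of a (standard, flip-braided) bialgebra `H` on an algebra `A`. -/
structure IsTransposition [HopfAlgebra k H] (s : H ⊗[k] A ≃ₗ[k] A ⊗[k] H) : Prop where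
  unit_H : ∀ a : A, s ((1 : H) ⊗ₜ[k] a) = a ⊗ₜ[k] (1 : H)
  mul_H : s.toLinearMap ∘ₗ (LinearMap.mul' k H).rTensor A
      = (LinearMap.mul' k H).lTensor A ∘ₗ braidPast s.toLinearMap s.toLinearMap
  counit_compat : (TensorProduct.rid k A).toLinearMap
        ∘ₗ (Coalgebra.counit (R := k) (A := H)).lTensor A ∘ₗ s.toLinearMap
      = (TensorProduct.lid k A).toLinearMap ∘ₗ (Coalgebra.counit (R := k) (A := H)).rTensor A
  comul_compat : (Coalgebra.comul (R := k) (A := H)).lTensor A ∘ₗ s.toLinearMap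
      = braidPast s.toLinearMap s.toLinearMap ∘ₗ (Coalgebra.comul (R := k) (A := H)).rTensor A
  unit_A : ∀ h : H, s (h ⊗ₜ[k] (1 : A)) = (1 : A) ⊗ₜ[k] h
  mul_A : s.toLinearMap ∘ₗ (LinearMap.mul' k A).lTensor H
      = (LinearMap.mul' k A).rTensor H ∘ₗ braidUnder s.toLinearMap s.toLinearMap
  braid_compat : braidPast s.toLinearMap s.toLinearMap
        ∘ₗ (TensorProduct.comm k H H).toLinearMap.rTensor A
      = (TensorProduct.comm k H H).toLinearMap.lTensor A
        ∘ₗ braidPast s.toLinearMap s.toLinearMap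

/-- The action `H ⊗ A → A` attached to an algebra morphism `H →ₐ Module.End k A`. -/
def actMap [HopfAlgebra k H] (ρ : H →ₐ[k] Module.End k A) : H ⊗[k] A →ₗ[k] A :=
  TensorProduct.lift ρ.toLinearMap

/-- `(A, s)` is a left `H`-braided module algebra via the action `ρ`
(braid of `H` = flip). -/
structure IsModuleAlgebra [HopfAlgebra k H] (s : H ⊗[k] A ≃ₗ[k] A ⊗[k] H)
    (ρ : H →ₐ[k] Module.End k A) : Prop where
  compat_s : s.toLinearMap ∘ₗ (actMap k H A ρ).lTensor H
        ∘ₗ (TensorProduct.assoc k H H A).toLinearMap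
      = (actMap k H A ρ).rTensor H
        ∘ₗ (TensorProduct.assoc k H A H).symm.toLinearMap
        ∘ₗ s.toLinearMap.lTensor H
        ∘ₗ (TensorProduct.assoc k H H A).toLinearMap
        ∘ₗ (TensorProduct.comm k H H).toLinearMap.rTensor A
  mul_act : ∀ (h : H) (a b : A), ρ h (a * b)
      = (LinearMap.mul' k A
          ∘ₗ TensorProduct.map (actMap k H A ρ) (actMap k H A ρ)
          ∘ₗ midMap s.toLinearMap)
        ((Coalgebra.comul (R := k) h) ⊗ₜ[k] (a ⊗ₜ[k] b))
  one_act : ∀ h : H, ρ h (1 : A) = Coalgebra.counit (R := k) h • (1 : A)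

/-- `s` is a *good* transposition. -/
def GoodTransposition {q : k} [HopfAlgebra k H] (hq : HqData k H q)
    (s : H ⊗[k] A ≃ₗ[k] A ⊗[k] H) : Prop :=
  ∀ a : A, braidPast s.toLinearMap s.toLinearMap ((hq.D₁ ⊗ₜ[k] hq.D₂) ⊗ₜ[k] a)
    = a ⊗ₜ[k] (hq.D₁ ⊗ₜ[k] hq.D₂)

end Hq


section Crossed

variable {G : Type*} [Group G] {V : Type*} [AddCommGroup V] [Module k V]

variable (G) in
/-- `f` is a normal 2-cocycle on `G` with values in `kˣ`. -/
structure IsCocycle (f : G → G → kˣ) : Prop where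
  one_left : ∀ g, f 1 g = 1
  one_right : ∀ g, f g 1 = 1
  cocycle : ∀ g h l, f g h * f (g * h) l = f g (h * l) * f h l

variable (A : Type*) [Ring A] [Algebra k A]

/-- Axiomatisation of the crossed product `S(V) #_f G`:  `A` is generated by a copy of `V`
(with commuting elements, generating a copy of the symmetric algebra) and elements `w g`,
and is free as a module over the symmetric part with basis `{w g}`. -/
structure CrossedProduct (ρV : Representation k G V) (f : G → G → kˣ) where
  ι : V →ₗ[k] A
  w : G → A
  w_one : w 1 = 1
  ι_comm : ∀ v v', ι v * ι v' = ι v' * ι v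
  w_ι : ∀ g v, w g * ι v = ι (ρV g v) * w g
  w_mul : ∀ g h, w g * w h = (f g h : k) • w (g * h)
  isBasis : ∀ {n : ℕ} (bV : Module.Basis (Fin n) k V),
      ∃ bA : Module.Basis ((Fin n → ℕ) × G) k A,
        ∀ d g, bA (d, g) = (List.ofFn fun i => ι (bV i) ^ d i).prod * w g

namespace CrossedProduct

variable {A} {ρV : Representation k G V} {f : G → G → kˣ}

/-- The product in `A` of the images of a list of elements of `V`. -/
def mon (cp : CrossedProduct A ρV f) (l : List V) : A := (l.map cp.ι).prod

/-- `v₁ ⋯ v_{j-1}` : the image of the prefix of a monomial. -/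
def pre (cp : CrossedProduct A ρV f) {m : ℕ} (v : Fin m → V) (j : Fin m) : A :=
  cp.mon ((List.ofFn v).take j)

/-- `v_{j+1} ⋯ v_m` : the image of the suffix of a monomial. -/
def suf (cp : CrossedProduct A ρV f) {m : ℕ} (v : Fin m → V) (j : Fin m) : A :=
  cp.mon ((List.ofFn v).drop (j + 1))

/-- The subalgebra `S(V)` of the crossed product. -/
def SV (cp : CrossedProduct A ρV f) : Subalgebra k A :=
  Algebra.adjoin k (Set.range cp.ι)

/-- The subalgebra `S(W)` of the crossed product, for a subspace `W ≤ V`. -/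
def SW (cp : CrossedProduct A ρV f) (W : Submodule k V) : Subalgebra k A :=
  Algebra.adjoin k (cp.ι '' (W : Set V))

end CrossedProduct

/-- A linear endomorphism of `V` is `k[G]`-linear if it commutes with the `G`-action. -/
def GLinear (ρV : Representation k G V) (φ : V →ₗ[k] V) : Prop :=
  ∀ g v, φ (ρV g v) = ρV g (φ v)

variable (G) in
/-- `χ : G → kˣ` is a group homomorphism. -/
def IsCharacter (χ : G → kˣ) : Prop := ∀ g h, χ (g * h) = χ g * χ h

section Defs

variable {H : Type*} [Ring H] [HopfAlgebra k H] {q : k}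
variable {ρV : Representation k G V} {f : G → G → kˣ}

/-- `s` is the (good) transposition of `H_q` on `A` associated with the automorphism `α`. -/
def AssocTransposition (hq : HqData k H q)
    (s : H ⊗[k] A ≃ₗ[k] A ⊗[k] H) (α : A ≃ₐ[k] A) : Prop :=
  IsTransposition k H A s ∧ GoodTransposition k H A hq s
    ∧ (∀ a : A, s (hq.D₁ ⊗ₜ[k] a) = α a ⊗ₜ[k] hq.D₁)
    ∧ (∀ a : A, s (hq.D₂ ⊗ₜ[k] a) = α.symm a ⊗ₜ[k] hq.D₂)

variable {A}

/-- `ς` is the endomorphism of `A` determined by `ς̂` and `χ_ς`. -/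
def SigmaDef (cp : CrossedProduct A ρV f) (ςhat : V →ₗ[k] V) (χς : G → kˣ)
    (ς : Module.End k A) : Prop :=
  ∀ (m : ℕ) (v : Fin m → V) (g : G),
    ς (cp.mon (List.ofFn v) * cp.w g)
      = (χς g : k) • (cp.mon (List.ofFn fun i => ςhat (v i)) * cp.w g)

/-- `δ₁` is determined by `δ̂₁`, `δ̄₁` via the `(α, ς)`-twisted Leibniz formula. -/
def Delta1Def (cp : CrossedProduct A ρV f) (α : A ≃ₐ[k] A) (ς : Module.End k A)
    (δhat : V →ₗ[k] A) (δbar : G → A) (δ : Module.End k A) : Prop :=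
  ∀ (m : ℕ) (v : Fin m → V) (g : G),
    δ (cp.mon (List.ofFn v) * cp.w g)
      = (∑ j : Fin m, α (cp.pre v j) * δhat (v j) * ς (cp.suf v j * cp.w g))
        + α (cp.mon (List.ofFn v)) * δbar g

/-- `δ₂` is determined by `δ̂₂`, `δ̄₂` via the `(ς ∘ α⁻¹, id)`-twisted Leibniz formula. -/
def Delta2Def (cp : CrossedProduct A ρV f) (α : A ≃ₐ[k] A) (ς : Module.End k A)
    (δhat : V →ₗ[k] A) (δbar : G → A) (δ : Module.End k A) : Prop :=
  ∀ (m : ℕ) (v : Fin m → V) (g : G),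
    δ (cp.mon (List.ofFn v) * cp.w g)
      = (∑ j : Fin m, ς (α.symm (cp.pre v j)) * δhat (v j) * (cp.suf v j * cp.w g))
        + ς (α.symm (cp.mon (List.ofFn v))) * δbar g

/-- There is an `H_q`-braided module algebra structure on `(A, s)` with the
prescribed values of the action on `V` and on the `w_g`. -/
def HasHqModuleStructure (hq : HqData k H q) (cp : CrossedProduct A ρV f)
    (s : H ⊗[k] A ≃ₗ[k] A ⊗[k] H) (ςhat : V →ₗ[k] V) (χς : G → kˣ)
    (δhat1 δhat2 : V →ₗ[k] A) (δbar1 δbar2 : G → A) : Prop :=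
  ∃ ρ : H →ₐ[k] Module.End k A, IsModuleAlgebra k H A s ρ
    ∧ (∀ v : V, ρ (hq.σ : H) (cp.ι v) = cp.ι (ςhat v))
    ∧ (∀ g : G, ρ (hq.σ : H) (cp.w g) = (χς g : k) • cp.w g)
    ∧ (∀ v : V, ρ hq.D₁ (cp.ι v) = δhat1 v)
    ∧ (∀ g : G, ρ hq.D₁ (cp.w g) = δbar1 g)
    ∧ (∀ v : V, ρ hq.D₂ (cp.ι v) = δhat2 v)
    ∧ (∀ g : G, ρ hq.D₂ (cp.w g) = δbar2 g)

end Defs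

end Crossed

end Paper

/-!
Both `δ₁` and `δ₂` are instances of a map `δ` given on the normal-form monomials `v₁ ⋯ vₘ w_g`
by a `(φ, ψ)`-twisted Leibniz expansion, for algebra endomorphisms `(φ, ψ) = (α, ς)` and
`(ς ∘ α⁻¹, id)` respectively. Evaluating the Leibniz rule on `w_g v = (g v) w_g` and on
`w_g w_h = f(g, h) w_{gh}` gives conditions (a) and (b). Conversely, the expansion already
yields `δ (v a) = δ̂ v ψ(a) + φ(v) δ a`; conditions (a) and (b) are exactly what is needed to
move `w_g` past the letters `v` and the final `w_h` of a monomial, which gives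
`δ (w_g a) = δ̄ g ψ(a) + φ(w_g) δ a`. The rule for longer products follows by induction on their
length.
-/

namespace Paper

variable {k : Type*} [Field k] {G : Type*} [Group G] {V : Type*} [AddCommGroup V] [Module k V]
  {A : Type*} [Ring A] [Algebra k A] {ρV : Representation k G V} {f : G → G → kˣ}

theorem IsCharacter.map_one {χ : G → kˣ} (hχ : IsCharacter G χ) : χ 1 = 1 := by
  simpa using hχ 1 1

namespace CrossedProduct

variable (cp : CrossedProduct A ρV f)

@[simp]
theorem mon_nil : cp.mon [] = 1 := rfl

@[simp]
theorem mon_cons (v : V) (l : List V) : cp.mon (v :: l) = cp.ι v * cp.mon l := by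
  simp [mon]

theorem mon_ofFn_cons {m : ℕ} (v : V) (u : Fin m → V) :
    cp.mon (List.ofFn (Fin.cons v u)) = cp.ι v * cp.mon (List.ofFn u) := by
  simp [List.ofFn_succ]

@[simp]
theorem pre_cons_zero {m : ℕ} (v : V) (u : Fin m → V) : cp.pre (Fin.cons v u) 0 = 1 := by
  simp [pre]

@[simp]
theorem pre_cons_succ {m : ℕ} (v : V) (u : Fin m → V) (j : Fin m) :
    cp.pre (Fin.cons v u) j.succ = cp.ι v * cp.pre u j := by
  simp [pre, List.ofFn_succ]

@[simp]
theorem suf_cons_zero {m : ℕ} (v : V) (u : Fin m → V) :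
    cp.suf (Fin.cons v u) 0 = cp.mon (List.ofFn u) := by
  simp [suf, List.ofFn_succ]

@[simp]
theorem suf_cons_succ {m : ℕ} (v : V) (u : Fin m → V) (j : Fin m) :
    cp.suf (Fin.cons v u) j.succ = cp.suf u j := by
  simp [suf, List.ofFn_succ]

@[elab_as_elim]
theorem induction_on [FiniteDimensional k V] {p : A → Prop} (a : A)
    (mon_mul_w : ∀ (m : ℕ) (v : Fin m → V) (g : G), p (cp.mon (List.ofFn v) * cp.w g))
    (add : ∀ a b, p a → p b → p (a + b)) (smul : ∀ (c : k) a, p a → p (c • a)) : p a := by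
  obtain ⟨b, hb⟩ := cp.isBasis (Module.finBasis k V)
  have basis : ∀ i, p (b i) := by
    rintro ⟨d, g⟩
    set l := (List.ofFn fun i => List.replicate (d i) (Module.finBasis k V i)).flatten
    have hl : (List.ofFn fun i => cp.ι (Module.finBasis k V i) ^ d i).prod = cp.mon l := by
      simp [l, mon, List.map_flatten, List.prod_flatten, Function.comp_def,
        List.prod_replicate]
    rw [hb, hl, ← List.ofFn_get l]
    exact mon_mul_w _ _ _
  induction b.mem_span a using Submodule.span_induction with
  | mem x hx => obtain ⟨i, rfl⟩ := hx; exact basis i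
  | zero => simpa using smul 0 _ (basis (0, 1))
  | add x y _ _ hx hy => exact add x y hx hy
  | smul c x _ hx => exact smul c x hx

@[elab_as_elim]
theorem induction_on_mul [FiniteDimensional k V] {p : A → Prop} (a : A)
    (w : ∀ g, p (cp.w g)) (ι_mul : ∀ v a, p a → p (cp.ι v * a))
    (add : ∀ a b, p a → p b → p (a + b)) (smul : ∀ (c : k) a, p a → p (c • a)) : p a := by
  refine cp.induction_on a (fun m v g => ?_) add smul
  induction m with
  | zero => simpa using w g
  | succ m ih =>
    rw [← Fin.cons_self_tail v, mon_ofFn_cons, mul_assoc]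
    exact ι_mul _ _ (ih _)

def IsGenerator (x : A) : Prop :=
  x ∈ Submodule.span k (Set.range cp.w) ∨ ∃ v : V, x = cp.ι v

theorem isGenerator_w (g : G) : cp.IsGenerator (cp.w g) :=
  Or.inl (Submodule.subset_span ⟨g, rfl⟩)

theorem isGenerator_ι (v : V) : cp.IsGenerator (cp.ι v) :=
  Or.inr ⟨v, rfl⟩

end CrossedProduct

section TwistedDerivation

variable (cp : CrossedProduct A ρV f) (φ ψ : A →ₐ[k] A) (δhat : V →ₗ[k] A) (δbar : G → A)
  (δ : A →ₗ[k] A)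

def TwistedExpansion : Prop :=
  ∀ (m : ℕ) (v : Fin m → V) (g : G),
    δ (cp.mon (List.ofFn v) * cp.w g)
      = (∑ j : Fin m, φ (cp.pre v j) * δhat (v j) * ψ (cp.suf v j * cp.w g))
        + φ (cp.mon (List.ofFn v)) * δbar g

def TwistedLeibniz : Prop :=
  ∀ (m : ℕ) (x : Fin m → A), (∀ i, cp.IsGenerator (x i)) →
    δ (List.ofFn x).prod
      = ∑ j : Fin m,
          φ ((List.ofFn x).take j).prod * δ (x j) * ψ ((List.ofFn x).drop (j + 1)).prod

/-- Compatibility with the relation `w_g v = (g v) w_g`: condition (a). -/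
def RespectsActionRel : Prop :=
  ∀ (g : G) (v : V),
    δhat (ρV g v) * ψ (cp.w g) + φ (cp.ι (ρV g v)) * δbar g
      = δbar g * ψ (cp.ι v) + φ (cp.w g) * δhat v

/-- Compatibility with the relation `w_g w_h = f(g, h) w_{gh}`: condition (b). -/
def RespectsCocycleRel : Prop :=
  ∀ g h : G, (f g h : k) • δbar (g * h) = δbar g * ψ (cp.w h) + φ (cp.w g) * δbar h

end TwistedDerivation

variable {cp : CrossedProduct A ρV f} {φ ψ : A →ₐ[k] A} {δhat : V →ₗ[k] A} {δbar : G → A}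
  {δ : A →ₗ[k] A}

theorem RespectsCocycleRel.apply_one (hB : RespectsCocycleRel cp φ ψ δbar) (hf : f 1 1 = 1) :
    δbar 1 = 0 := by
  simpa [hf, cp.w_one] using hB 1 1

namespace TwistedExpansion

theorem apply_w (hδ : TwistedExpansion cp φ ψ δhat δbar δ) (g : G) : δ (cp.w g) = δbar g := by
  simpa using hδ 0 Fin.elim0 g

theorem apply_ι (hδ : TwistedExpansion cp φ ψ δhat δbar δ) (h1 : δbar 1 = 0) (v : V) :
    δ (cp.ι v) = δhat v := by
  simpa [List.ofFn_succ, CrossedProduct.pre, CrossedProduct.suf, cp.w_one, h1]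
    using hδ 1 (fun _ => v) 1

variable [FiniteDimensional k V]

theorem apply_ι_mul (hδ : TwistedExpansion cp φ ψ δhat δbar δ) (v : V) (a : A) :
    δ (cp.ι v * a) = δhat v * ψ a + φ (cp.ι v) * δ a := by
  induction a using cp.induction_on with
  | mon_mul_w m u g =>
    rw [← mul_assoc, ← cp.mon_ofFn_cons, hδ, Fin.sum_univ_succ, hδ]
    simp only [cp.pre_cons_zero, cp.pre_cons_succ, cp.suf_cons_zero, cp.suf_cons_succ,
      Fin.cons_zero, Fin.cons_succ, map_one, one_mul, map_mul, cp.mon_ofFn_cons,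
      Finset.mul_sum, mul_add, mul_assoc]
    abel
  | add a b ha hb =>
    simp only [mul_add, map_add, ha, hb]
    abel
  | smul c a ha => simp only [mul_smul_comm, map_smul, ha, smul_add]

theorem apply_w_mul (hδ : TwistedExpansion cp φ ψ δhat δbar δ)
    (hA : RespectsActionRel cp φ ψ δhat δbar) (hB : RespectsCocycleRel cp φ ψ δbar)
    (g : G) (a : A) : δ (cp.w g * a) = δbar g * ψ a + φ (cp.w g) * δ a := by
  induction a using cp.induction_on_mul with
  | w h => rw [cp.w_mul, map_smul, hδ.apply_w, hB, hδ.apply_w]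
  | ι_mul v a ih =>
    have hcomm : φ (cp.ι (ρV g v)) * φ (cp.w g) = φ (cp.w g) * φ (cp.ι v) := by
      rw [← map_mul, ← map_mul, cp.w_ι]
    rw [← mul_assoc, cp.w_ι, mul_assoc, hδ.apply_ι_mul, ih, hδ.apply_ι_mul]
    calc δhat (ρV g v) * ψ (cp.w g * a)
          + φ (cp.ι (ρV g v)) * (δbar g * ψ a + φ (cp.w g) * δ a)
        = (δhat (ρV g v) * ψ (cp.w g) + φ (cp.ι (ρV g v)) * δbar g) * ψ a
          + φ (cp.ι (ρV g v)) * φ (cp.w g) * δ a := by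
          rw [map_mul]; noncomm_ring
      _ = δbar g * ψ (cp.ι v * a) + φ (cp.w g) * (δhat v * ψ a + φ (cp.ι v) * δ a) := by
          rw [hA, hcomm, map_mul]; noncomm_ring
  | add a b ha hb =>
    simp only [mul_add, map_add, ha, hb]
    abel
  | smul c a ha => simp only [mul_smul_comm, map_smul, ha, smul_add]

theorem apply_mul_of_isGenerator (hδ : TwistedExpansion cp φ ψ δhat δbar δ)
    (hA : RespectsActionRel cp φ ψ δhat δbar) (hB : RespectsCocycleRel cp φ ψ δbar)
    (h1 : δbar 1 = 0) {x : A} (hx : cp.IsGenerator x) (a : A) :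
    δ (x * a) = δ x * ψ a + φ x * δ a := by
  rcases hx with hx | ⟨v, rfl⟩
  · induction hx using Submodule.span_induction with
    | mem x hx =>
      obtain ⟨g, rfl⟩ := hx
      rw [hδ.apply_w_mul hA hB, hδ.apply_w]
    | zero => simp
    | add x y _ _ hx hy =>
      simp only [add_mul, map_add, hx, hy]
      abel
    | smul c x _ hx => simp only [smul_mul_assoc, map_smul, hx, smul_add]
  · rw [hδ.apply_ι_mul, hδ.apply_ι h1]

theorem twistedLeibniz (hδ : TwistedExpansion cp φ ψ δhat δbar δ)
    (hA : RespectsActionRel cp φ ψ δhat δbar) (hB : RespectsCocycleRel cp φ ψ δbar)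
    (h1 : δbar 1 = 0) : TwistedLeibniz cp φ ψ δ := by
  intro m x hx
  induction m with
  | zero => simpa [← cp.w_one, hδ.apply_w] using h1
  | succ m ih =>
    rw [List.ofFn_succ, List.prod_cons, hδ.apply_mul_of_isGenerator hA hB h1 (hx 0),
      ih _ fun i => hx i.succ, Fin.sum_univ_succ, Finset.mul_sum]
    simp [mul_assoc]

end TwistedExpansion

namespace TwistedLeibniz

theorem apply_one (hL : TwistedLeibniz cp φ ψ δ) : δ 1 = 0 := by
  simpa using hL 0 Fin.elim0 fun i => i.elim0

theorem apply_mul (hL : TwistedLeibniz cp φ ψ δ) {x y : A} (hx : cp.IsGenerator x)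
    (hy : cp.IsGenerator y) : δ (x * y) = δ x * ψ y + φ x * δ y := by
  simpa [List.ofFn_succ] using hL 2 ![x, y] (Fin.forall_fin_two.2 ⟨hx, hy⟩)

end TwistedLeibniz

namespace TwistedExpansion

theorem respectsActionRel (hδ : TwistedExpansion cp φ ψ δhat δbar δ)
    (hL : TwistedLeibniz cp φ ψ δ) : RespectsActionRel cp φ ψ δhat δbar := by
  have h1 : δbar 1 = 0 := by rw [← hδ.apply_w, cp.w_one, hL.apply_one]
  intro g v
  have h := hL.apply_mul (cp.isGenerator_w g) (cp.isGenerator_ι v)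
  rwa [cp.w_ι, hL.apply_mul (cp.isGenerator_ι _) (cp.isGenerator_w g), hδ.apply_w,
    hδ.apply_ι h1, hδ.apply_ι h1] at h

theorem respectsCocycleRel (hδ : TwistedExpansion cp φ ψ δhat δbar δ)
    (hL : TwistedLeibniz cp φ ψ δ) : RespectsCocycleRel cp φ ψ δbar := by
  intro g h
  have hgh := hL.apply_mul (cp.isGenerator_w g) (cp.isGenerator_w h)
  rwa [cp.w_mul, map_smul, hδ.apply_w, hδ.apply_w, hδ.apply_w] at hgh

theorem twistedLeibniz_iff [FiniteDimensional k V] (hδ : TwistedExpansion cp φ ψ δhat δbar δ)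
    (hf : f 1 1 = 1) :
    TwistedLeibniz cp φ ψ δ
      ↔ RespectsActionRel cp φ ψ δhat δbar ∧ RespectsCocycleRel cp φ ψ δbar :=
  ⟨fun hL => ⟨hδ.respectsActionRel hL, hδ.respectsCocycleRel hL⟩,
    fun ⟨hA, hB⟩ => hδ.twistedLeibniz hA hB (hB.apply_one hf)⟩

end TwistedExpansion

end Paper

open Paper in
theorem statement_10_general {k : Type*} [Field k]
    {G : Type*} [Group G] {V : Type*} [AddCommGroup V] [Module k V] [FiniteDimensional k V]
    (ρV : Representation k G V) (f : G → G → kˣ) (hf : IsCocycle G f)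
    {A : Type*} [Ring A] [Algebra k A] (cp : CrossedProduct A ρV f)
    (αhat : V ≃ₗ[k] V)
    (χα : G → kˣ)
    (α : A ≃ₐ[k] A)
    (hαι : ∀ v : V, α (cp.ι v) = cp.ι (αhat v))
    (hαw : ∀ g : G, α (cp.w g) = (χα g : k) • cp.w g)
    (ςhat : V ≃ₗ[k] V)
    (χς : G → kˣ) (hχς : IsCharacter G χς)
    (ς : Module.End k A) (hςdef : SigmaDef cp (ςhat : V →ₗ[k] V) χς ς)
    (hς1 : ς 1 = 1) (hςmul : ∀ a b : A, ς (a * b) = ς a * ς b)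
    (δhat₁ δhat₂ : V →ₗ[k] A) (δbar₁ δbar₂ : G → A)
    (δ₁ δ₂ : Module.End k A)
    (hδ₁ : Delta1Def cp α ς δhat₁ δbar₁ δ₁)
    (hδ₂ : Delta2Def cp α ς δhat₂ δbar₂ δ₂) :
    ((∀ (m : ℕ) (x : Fin m → A),
        (∀ i, x i ∈ Submodule.span k (Set.range cp.w) ∨ ∃ v : V, x i = cp.ι v) →
        δ₁ (List.ofFn x).prod
          = ∑ j : Fin m,
              α ((List.ofFn x).take j).prod * δ₁ (x j) * ς ((List.ofFn x).drop (j + 1)).prod)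
      ↔ ((∀ (g : G) (v : V),
            (χς g : k) • (δhat₁ (ρV g v) * cp.w g) + cp.ι (αhat (ρV g v)) * δbar₁ g
              = δbar₁ g * cp.ι (ςhat v) + (χα g : k) • (cp.w g * δhat₁ v))
          ∧ ∀ g h : G,
              (f g h : k) • δbar₁ (g * h)
                = (χς h : k) • (δbar₁ g * cp.w h) + (χα g : k) • (cp.w g * δbar₁ h)))
    ∧ ((∀ (m : ℕ) (x : Fin m → A),
        (∀ i, x i ∈ Submodule.span k (Set.range cp.w) ∨ ∃ v : V, x i = cp.ι v) →
        δ₂ (List.ofFn x).prod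
          = ∑ j : Fin m,
              ς (α.symm ((List.ofFn x).take j).prod) * δ₂ (x j)
                * ((List.ofFn x).drop (j + 1)).prod)
      ↔ ((∀ (g : G) (v : V),
            δhat₂ (ρV g v) * cp.w g + cp.ι (ςhat (αhat.symm (ρV g v))) * δbar₂ g
              = δbar₂ g * cp.ι v + ((χς g * (χα g)⁻¹ : kˣ) : k) • (cp.w g * δhat₂ v))
          ∧ ∀ g h : G,
              (f g h : k) • δbar₂ (g * h)
                = δbar₂ g * cp.w h + ((χς g * (χα g)⁻¹ : kˣ) : k) • (cp.w g * δbar₂ h))) := by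
  have hςι (v : V) : ς (cp.ι v) = cp.ι (ςhat v) := by
    simpa [List.ofFn_succ, CrossedProduct.mon, cp.w_one, hχς.map_one]
      using hςdef 1 (fun _ => v) 1
  have hςw (g : G) : ς (cp.w g) = (χς g : k) • cp.w g := by
    simpa [CrossedProduct.mon] using hςdef 0 Fin.elim0 g
  have hςα_symm_ι (v : V) : ς (α.symm (cp.ι v)) = cp.ι (ςhat (αhat.symm v)) := by
    have hα_symm_ι : α.symm (cp.ι v) = cp.ι (αhat.symm v) := by
      rw [AlgEquiv.symm_apply_eq, hαι, LinearEquiv.apply_symm_apply]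
    rw [hα_symm_ι, hςι]
  have hςα_symm_w (g : G) :
      ς (α.symm (cp.w g)) = ((χς g * (χα g)⁻¹ : kˣ) : k) • cp.w g := by
    have hα_symm_w : α.symm (cp.w g) = (((χα g)⁻¹ : kˣ) : k) • cp.w g := by
      rw [AlgEquiv.symm_apply_eq, map_smul, hαw, smul_smul, ← Units.val_mul, inv_mul_cancel,
        Units.val_one, one_smul]
    rw [hα_symm_w, map_smul, hςw, smul_smul, ← Units.val_mul, mul_comm]
  let ςₐ : A →ₐ[k] A := AlgHom.ofLinearMap ς hς1 hςmul
  constructor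
  · refine (TwistedExpansion.twistedLeibniz_iff (φ := α.toAlgHom) (ψ := ςₐ) hδ₁
      (hf.one_left 1)).trans ?_
    simp only [RespectsActionRel, RespectsCocycleRel, ςₐ, AlgHom.ofLinearMap_apply,
      AlgEquiv.coe_toAlgHom, hαι, hαw, hςι, hςw, mul_smul_comm, smul_mul_assoc]
  · refine (TwistedExpansion.twistedLeibniz_iff (φ := ςₐ.comp α.symm) (ψ := AlgHom.id k A) hδ₂
      (hf.one_left 1)).trans ?_
    simp only [RespectsActionRel, RespectsCocycleRel, ςₐ, AlgHom.comp_apply,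
      AlgHom.ofLinearMap_apply, AlgEquiv.coe_toAlgHom, AlgHom.id_apply, hςα_symm_ι, hςα_symm_w,
      smul_mul_assoc]

open Paper in
/-- The Leibniz rule of `δ₁`, `δ₂` on mixed products of elements of
`k#_f G` and `V`, characterised by conditions (a) and (b). -/
theorem statement_10 {k : Type*} [Field k]
    {G : Type*} [Group G] {V : Type*} [AddCommGroup V] [Module k V] [FiniteDimensional k V]
    (ρV : Representation k G V) (f : G → G → kˣ) (hf : IsCocycle G f)
    {A : Type*} [Ring A] [Algebra k A] (cp : CrossedProduct A ρV f)
    (αhat : V ≃ₗ[k] V) (hαG : GLinear ρV (αhat : V →ₗ[k] V))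
    (χα : G → kˣ) (hχα : IsCharacter G χα)
    (α : A ≃ₐ[k] A)
    (hαι : ∀ v : V, α (cp.ι v) = cp.ι (αhat v))
    (hαw : ∀ g : G, α (cp.w g) = (χα g : k) • cp.w g)
    (ςhat : V ≃ₗ[k] V) (hςG : GLinear ρV (ςhat : V →ₗ[k] V))
    (χς : G → kˣ) (hχς : IsCharacter G χς)
    (ς : Module.End k A) (hςdef : SigmaDef cp (ςhat : V →ₗ[k] V) χς ς)
    (hς1 : ς 1 = 1) (hςmul : ∀ a b : A, ς (a * b) = ς a * ς b)
    (hςbij : Function.Bijective ς)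
    (δhat₁ δhat₂ : V →ₗ[k] A) (δbar₁ δbar₂ : G → A)
    (δ₁ δ₂ : Module.End k A)
    (hδ₁ : Delta1Def cp α ς δhat₁ δbar₁ δ₁)
    (hδ₂ : Delta2Def cp α ς δhat₂ δbar₂ δ₂) :
    ((∀ (m : ℕ) (x : Fin m → A),
        (∀ i, x i ∈ Submodule.span k (Set.range cp.w) ∨ ∃ v : V, x i = cp.ι v) →
        δ₁ (List.ofFn x).prod
          = ∑ j : Fin m,
              α ((List.ofFn x).take j).prod * δ₁ (x j) * ς ((List.ofFn x).drop (j + 1)).prod)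
      ↔ ((∀ (g : G) (v : V),
            (χς g : k) • (δhat₁ (ρV g v) * cp.w g) + cp.ι (αhat (ρV g v)) * δbar₁ g
              = δbar₁ g * cp.ι (ςhat v) + (χα g : k) • (cp.w g * δhat₁ v))
          ∧ ∀ g h : G,
              (f g h : k) • δbar₁ (g * h)
                = (χς h : k) • (δbar₁ g * cp.w h) + (χα g : k) • (cp.w g * δbar₁ h)))
    ∧ ((∀ (m : ℕ) (x : Fin m → A),
        (∀ i, x i ∈ Submodule.span k (Set.range cp.w) ∨ ∃ v : V, x i = cp.ι v) →
        δ₂ (List.ofFn x).prod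
          = ∑ j : Fin m,
              ς (α.symm ((List.ofFn x).take j).prod) * δ₂ (x j)
                * ((List.ofFn x).drop (j + 1)).prod)
      ↔ ((∀ (g : G) (v : V),
            δhat₂ (ρV g v) * cp.w g + cp.ι (ςhat (αhat.symm (ρV g v))) * δbar₂ g
              = δbar₂ g * cp.ι v + ((χς g * (χα g)⁻¹ : kˣ) : k) • (cp.w g * δhat₂ v))
          ∧ ∀ g h : G,
              (f g h : k) • δbar₂ (g * h)
                = δbar₂ g * cp.w h + ((χς g * (χα g)⁻¹ : kˣ) : k) • (cp.w g * δbar₂ h))) :=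
  statement_10_general ρV f hf cp αhat χα α hαι hαw ςhat χς hχς ς hςdef hς1 hςmul δhat₁ δhat₂ δbar₁
    δbar₂ δ₁ δ₂ hδ₁ hδ₂
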